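/- If the dual X* of a Banach space X is uacs, then δ_uacs^X(ε) ≥ δ_uacs^{X*}(δ_uacs^{X*}(ε)) for all ε ∈ (0,2]; in particular X is uacs. -/

import Mathlib

open Filter Topology

/-- The uacs modulus of convexity. -/
noncomputable def deltaUacs (X : Type*) [NormedAddCommGroup X] [NormedSpace ℝ X] (ε : ℝ) : ℝ :=
  sInf {d : ℝ | ∃ x y : X, ‖x‖ = 1 ∧ ‖y‖ = 1 ∧
    (∃ f : StrongDual ℝ X, ‖f‖ = 1 ∧ f x = 1 ∧ f y ≤ 1 - ε) ∧
    d = 1 - ‖x + y‖ / 2}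

section Aux

variable {E : Type*} [NormedAddCommGroup E] [NormedSpace ℝ E]

lemma clm_apply_le_uacs (f : E →L[ℝ] ℝ) (x : E) : f x ≤ ‖f‖ * ‖x‖ :=
  (Real.le_norm_self _).trans (f.le_opNorm x)

lemma uacs_bddBelow (ε : ℝ) :
    BddBelow {d : ℝ | ∃ x y : E, ‖x‖ = 1 ∧ ‖y‖ = 1 ∧
      (∃ f : StrongDual ℝ E, ‖f‖ = 1 ∧ f x = 1 ∧ f y ≤ 1 - ε) ∧
      d = 1 - ‖x + y‖ / 2} := by
  refine ⟨0, ?_⟩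
  rintro d ⟨x, y, hx, hy, -, rfl⟩
  have h2 : ‖x + y‖ ≤ 2 := by
    have := norm_add_le x y
    rw [hx, hy] at this
    linarith
  linarith

lemma deltaUacs_le_of_witness {ε : ℝ} {x y : E} {f : StrongDual ℝ E}
    (hx : ‖x‖ = 1) (hy : ‖y‖ = 1) (hf : ‖f‖ = 1) (hfx : f x = 1) (hfy : f y ≤ 1 - ε) :
    deltaUacs E ε ≤ 1 - ‖x + y‖ / 2 :=
  csInf_le (uacs_bddBelow ε) ⟨x, y, hx, hy, ⟨f, hf, hfx, hfy⟩, rfl⟩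

lemma deltaUacs_eq_zero_of_no_unit (h : ∀ u : E, ‖u‖ ≠ 1) (ε : ℝ) : deltaUacs E ε = 0 := by
  unfold deltaUacs
  have hempty : {d : ℝ | ∃ x y : E, ‖x‖ = 1 ∧ ‖y‖ = 1 ∧
      (∃ f : StrongDual ℝ E, ‖f‖ = 1 ∧ f x = 1 ∧ f y ≤ 1 - ε) ∧
      d = 1 - ‖x + y‖ / 2} = (∅ : Set ℝ) := by
    refine Set.eq_empty_iff_forall_notMem.2 ?_
    rintro d ⟨x, y, hx, -⟩
    exact h x hx
  rw [hempty, Real.sInf_empty]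

end Aux

theorem uacs_of_dual_uacs (X : Type*) [NormedAddCommGroup X] [NormedSpace ℝ X] [CompleteSpace X]
    (hdual : ∀ ε ∈ Set.Ioc (0 : ℝ) 2, 0 < deltaUacs (StrongDual ℝ X) ε) :
    (∀ ε ∈ Set.Ioc (0 : ℝ) 2,
      deltaUacs (StrongDual ℝ X) (deltaUacs (StrongDual ℝ X) ε) ≤ deltaUacs X ε) ∧
    (∀ ε ∈ Set.Ioc (0 : ℝ) 2, 0 < deltaUacs X ε) := by
  by_cases hX : ∃ z : X, z ≠ 0
  swap
  · exfalso
    push_neg at hX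
    have hzero : ∀ u : StrongDual ℝ X, ‖u‖ ≠ 1 := by
      intro u hu
      have : u = 0 := by
        ext z
        rw [hX z]
        simp
      rw [this, norm_zero] at hu
      norm_num at hu
    have h2 := hdual 2 ⟨by norm_num, le_refl 2⟩
    rw [deltaUacs_eq_zero_of_no_unit hzero] at h2
    exact lt_irrefl 0 h2
  obtain ⟨z, hz⟩ := hX
  set x₀ : X := ‖z‖⁻¹ • z with hx₀def
  have hx₀ : ‖x₀‖ = 1 := norm_smul_inv_norm hz
  have hx₀ne : x₀ ≠ 0 := by
    intro h0
    rw [h0, norm_zero] at hx₀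
    norm_num at hx₀
  obtain ⟨f₀, hf₀, hf₀x'⟩ := exists_dual_vector ℝ x₀ (norm_ne_zero_iff.2 hx₀ne)
  have hf₀x : f₀ x₀ = 1 := by
    rw [hx₀] at hf₀x'
    exact_mod_cast hf₀x'
  set ι := NormedSpace.inclusionInDoubleDual ℝ X with hιdef
  have hιnorm : ∀ w : X, ‖ι w‖ = ‖w‖ := fun w =>
    (NormedSpace.inclusionInDoubleDualLi ℝ (E := X)).norm_map w
  -- δ₁ ≤ 1 for every ε ≤ 2
  have hδ₁le1 : ∀ ε : ℝ, ε ≤ 2 → deltaUacs (StrongDual ℝ X) ε ≤ 1 := by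
    intro ε hε
    have hw := deltaUacs_le_of_witness (E := StrongDual ℝ X) (ε := ε)
      (x := f₀) (y := -f₀) (f := ι x₀) hf₀ (by rw [norm_neg, hf₀])
      (by rw [hιnorm, hx₀]) (by exact hf₀x)
      (by rw [map_neg]
          have e : ι x₀ f₀ = (1 : ℝ) := hf₀x
          rw [e]; linarith)
    simpa using hw
  -- the key inequality
  have key : ∀ ε ∈ Set.Ioc (0 : ℝ) 2, ∀ (x y : X) (f : StrongDual ℝ X),
      ‖x‖ = 1 → ‖y‖ = 1 → ‖f‖ = 1 → f x = 1 → f y ≤ 1 - ε →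
      deltaUacs (StrongDual ℝ X) (deltaUacs (StrongDual ℝ X) ε)
        ≤ 1 - ‖x + y‖ / 2 := by
    rintro ε ⟨hε0, hε2⟩ x y f hx hy hf hfx hfy
    set δ₁ := deltaUacs (StrongDual ℝ X) ε with hδ₁def
    have hyne : y ≠ 0 := by
      intro h0
      rw [h0, norm_zero] at hy
      norm_num at hy
    obtain ⟨h, hh, hhy'⟩ := exists_dual_vector ℝ y (norm_ne_zero_iff.2 hyne)
    have hhy : h y = 1 := by
      rw [hy] at hhy'
      exact_mod_cast hhy'
    -- step 1 : ‖h + f‖ ≤ 2 - 2 δ₁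
    have step1 : δ₁ ≤ 1 - ‖h + f‖ / 2 :=
      deltaUacs_le_of_witness (E := StrongDual ℝ X) (ε := ε) (x := h) (y := f) (f := ι y)
        hh hf (by rw [hιnorm, hy]) (by exact hhy) (by exact hfy)
    have hfh : ‖h + f‖ ≤ 2 - 2 * δ₁ := by linarith
    have hδ₁1 : δ₁ ≤ 1 := hδ₁le1 ε hε2
    by_cases hxy : x + y = 0
    · rw [hxy, norm_zero]
      have hw := deltaUacs_le_of_witness (E := StrongDual ℝ X) (ε := δ₁)
        (x := f) (y := -f) (f := ι x) hf (by rw [norm_neg, hf])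
        (by rw [hιnorm, hx]) (by exact hfx)
        (by rw [map_neg]
            have e : ι x f = (1 : ℝ) := hfx
            rw [e]; linarith)
      simpa using hw
    · have hspos : (0 : ℝ) < ‖x + y‖ := norm_pos_iff.2 hxy
      set v : X := ‖x + y‖⁻¹ • (x + y) with hvdef
      have hv : ‖v‖ = 1 := norm_smul_inv_norm hxy
      have hvne : v ≠ 0 := by
        intro h0
        rw [h0, norm_zero] at hv
        norm_num at hv
      obtain ⟨g, hg, hgv'⟩ := exists_dual_vector ℝ v (norm_ne_zero_iff.2 hvne)
      have hgv : g v = 1 := by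
        rw [hv] at hgv'
        exact_mod_cast hgv'
      have hgxy : g x + g y = ‖x + y‖ := by
        have h1 : ‖x + y‖⁻¹ * g (x + y) = 1 := by
          rw [hvdef] at hgv
          rw [map_smul, smul_eq_mul] at hgv
          exact hgv
        rw [inv_mul_eq_one₀ (ne_of_gt hspos)] at h1
        rw [← map_add]
        exact h1.symm
      have hgne : g ≠ 0 := by
        intro h0
        rw [h0, norm_zero] at hg
        norm_num at hg
      obtain ⟨G, hG, hGg'⟩ := exists_dual_vector ℝ (E := StrongDual ℝ X) g (norm_ne_zero_iff.2 hgne)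
      have hGg : G g = 1 := by
        rw [hg] at hGg'
        exact_mod_cast hGg'
      have hgx1 : g x ≤ 1 := by
        have := clm_apply_le_uacs g x
        rw [hg, hx] at this
        linarith
      have hgy1 : g y ≤ 1 := by
        have := clm_apply_le_uacs g y
        rw [hg, hy] at this
        linarith
      by_cases hGf : G f ≤ 1 - δ₁
      · have hw := deltaUacs_le_of_witness (E := StrongDual ℝ X) (ε := δ₁)
          (x := g) (y := f) (f := G) hg hf hG hGg hGf
        have hbig : ‖x + y‖ ≤ ‖g + f‖ := by
          have happ := clm_apply_le_uacs (g + f) x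
          rw [hx, mul_one] at happ
          have : (g + f) x = g x + 1 := by
            rw [ContinuousLinearMap.add_apply, hfx]
          linarith
        linarith
      · by_cases hGh : G h ≤ 1 - δ₁
        · have hw := deltaUacs_le_of_witness (E := StrongDual ℝ X) (ε := δ₁)
            (x := g) (y := h) (f := G) hg hh hG hGg hGh
          have hbig : ‖x + y‖ ≤ ‖g + h‖ := by
            have happ := clm_apply_le_uacs (g + h) y
            rw [hy, mul_one] at happ
            have : (g + h) y = g y + 1 := by
              rw [ContinuousLinearMap.add_apply, hhy]
            linarith
          linarith
        · exfalso
          push_neg at hGf hGh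
          have hsum : G (f + h) = G f + G h := map_add G f h
          have hub : G (f + h) ≤ ‖f + h‖ := by
            have := clm_apply_le_uacs G (f + h)
            rw [hG, one_mul] at this
            exact this
          have hcomm : ‖f + h‖ = ‖h + f‖ := by rw [add_comm]
          have hδ₁pos : 0 < δ₁ := hdual ε ⟨hε0, hε2⟩
          linarith
  -- nonempty witness for the X-set
  have hne : ∀ ε : ℝ, ε ≤ 2 → {d : ℝ | ∃ x y : X, ‖x‖ = 1 ∧ ‖y‖ = 1 ∧
      (∃ f : StrongDual ℝ X, ‖f‖ = 1 ∧ f x = 1 ∧ f y ≤ 1 - ε) ∧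
      d = 1 - ‖x + y‖ / 2}.Nonempty := by
    intro ε hε
    exact ⟨1 - ‖x₀ + (-x₀)‖ / 2, x₀, -x₀, hx₀, by rw [norm_neg, hx₀],
      ⟨f₀, hf₀, hf₀x, by simp only [map_neg, hf₀x]; linarith⟩, rfl⟩
  have part1 : ∀ ε ∈ Set.Ioc (0 : ℝ) 2,
      deltaUacs (StrongDual ℝ X) (deltaUacs (StrongDual ℝ X) ε) ≤ deltaUacs X ε := by
    intro ε hε
    refine le_csInf (hne ε hε.2) ?_
    rintro d ⟨x, y, hx, hy, ⟨f, hf, hfx, hfy⟩, rfl⟩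
    exact key ε hε x y f hx hy hf hfx hfy
  refine ⟨part1, ?_⟩
  intro ε hε
  have hδ₁pos : 0 < deltaUacs (StrongDual ℝ X) ε := hdual ε hε
  have hδ₁le : deltaUacs (StrongDual ℝ X) ε ≤ 2 := (hδ₁le1 ε hε.2).trans one_le_two
  have hδ₂pos : 0 < deltaUacs (StrongDual ℝ X) (deltaUacs (StrongDual ℝ X) ε) :=
    hdual _ ⟨hδ₁pos, hδ₁le⟩
  exact lt_of_lt_of_le hδ₂pos (part1 ε hε)
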